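/- Let (λ_n)_{n≥1} be positive real numbers with s_k := Σ_{n=1}^k 1/λ_n → ∞ as k → ∞. In the Hilbert space tensor product HS(ℓ²) ⊗ HS(ℓ²) of Hilbert–Schmidt operators on ℓ², the elements T_k := Σ_{n=1}^k (s_k λ_n^{1/2})^{-1} e_{1n} ⊗ e_{n1} satisfy ‖T_k‖² = 1/s_k → 0, while Σ_{n=1}^k (s_k λ_n^{1/2})^{-1} e_{1n} h^{-1/2} e_{n1} = e_{11} for every k, where h is the (unbounded, positive, diagonal) operator with diagonal entries λ_n. Hence the densely defined linear map determined by a ⊗ b ↦ a h^{-1/2} b (for a, b finitely supported matrices) from HS(ℓ²) ⊗ HS(ℓ²) to HS(ℓ²) is not preclosed. -/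
import Mathlib


noncomputable section
open Filter Topology

/-- `HS(ℓ²)`: Hilbert–Schmidt matrices, realized as `ℓ²` of the entries. -/
abbrev HSmat := lp (fun _ : ℕ × ℕ => ℂ) 2

/-- `HS(ℓ²) ⊗ HS(ℓ²)`: the Hilbert space tensor product, realized as `ℓ²` over pairs of
indices (the tensor products `e_{ij} ⊗ e_{lk}` of matrix units forming an orthonormal
basis). -/
abbrev HS2 := lp (fun _ : (ℕ × ℕ) × ℕ × ℕ => ℂ) 2

lemma single_sum_aux {β : Type*} (i : ℕ × ℕ) (t : Finset β) (f : β → ℂ) :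
    ∑ b ∈ t, lp.single (E := fun _ : ℕ × ℕ => ℂ) 2 i (f b)
      = lp.single 2 i (∑ b ∈ t, f b) := by
  apply lp.ext
  funext j
  rw [lp.coeFn_sum]
  simp only [Finset.sum_apply, lp.single_apply]
  by_cases h : j = i
  · subst h; simp
  · simp [h]

/-- Let `λ_n > 0` with `s_k = Σ_{n<k} 1/λ_n → ∞`.  In
`HS(ℓ²) ⊗ HS(ℓ²)`, the tensors `T_k = Σ_{n<k} (s_k λ_n^{1/2})⁻¹ e_{0n} ⊗ e_{n0}`
satisfy `‖T_k‖² = 1/s_k → 0`, while the multiplication map determined on finitely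
supported tensors by `a ⊗ b ↦ a h^{-1/2} b` (where `h = diag(λ_n)`) sends each `T_k`
to `Σ_{n<k} (s_k λ_n)⁻¹ e_{00} = e_{00} ≠ 0`.  Hence this densely defined map
`HS(ℓ²) ⊗ HS(ℓ²) → HS(ℓ²)` is not preclosed. -/
theorem statement14 (lam : ℕ → ℝ) (hpos : ∀ n, 0 < lam n)
    (s : ℕ → ℝ) (hs : ∀ k, s k = ∑ n ∈ Finset.range k, 1 / lam n)
    (hdiv : Tendsto s atTop atTop)
    -- the inclusion of finitely supported tensors into `HS(ℓ²) ⊗ HS(ℓ²)`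
    (incl : (((ℕ × ℕ) × ℕ × ℕ) →₀ ℂ) →ₗ[ℂ] HS2)
    (hincl : ∀ (z : (ℕ × ℕ) × ℕ × ℕ) (c : ℂ), incl (Finsupp.single z c) = lp.single 2 z c)
    -- the multiplication map `a ⊗ b ↦ a h^{-1/2} b` on finitely supported tensors
    (mult : (((ℕ × ℕ) × ℕ × ℕ) →₀ ℂ) →ₗ[ℂ] HSmat)
    (hmult : ∀ (i j l k : ℕ) (c : ℂ),
      mult (Finsupp.single ((i, j), (l, k)) c) =
        if j = l then lp.single 2 (i, k) (((Real.sqrt (lam j) : ℂ))⁻¹ * c) else 0)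
    -- the tensors `T_k`
    (T : ℕ → (((ℕ × ℕ) × ℕ × ℕ) →₀ ℂ))
    (hT : ∀ k, T k = ∑ n ∈ Finset.range k,
      Finsupp.single ((0, n), (n, 0)) (((s k * Real.sqrt (lam n) : ℝ) : ℂ))⁻¹) :
    -- `‖T_k‖² = 1/s_k`
    (∀ k, 0 < s k → ‖incl (T k)‖ ^ 2 = 1 / s k) ∧
    Tendsto (fun k => incl (T k)) atTop (nhds 0) ∧
    -- `T_k ↦ e_{00}`
    (∀ k, 0 < s k → mult (T k) = lp.single 2 ((0 : ℕ), (0 : ℕ)) (1 : ℂ)) ∧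
    lp.single 2 ((0 : ℕ), (0 : ℕ)) (1 : ℂ) ≠ (0 : HSmat) ∧
    -- hence the map is not preclosed
    ¬ (∀ (u : ℕ → (((ℕ × ℕ) × ℕ × ℕ) →₀ ℂ)) (w : HSmat),
        Tendsto (fun k => incl (u k)) atTop (nhds 0) →
        Tendsto (fun k => mult (u k)) atTop (nhds w) → w = 0) := by
  -- notation
  set g : ℕ → (ℕ × ℕ) × ℕ × ℕ := fun n => ((0, n), (n, 0)) with hg
  have hginj : Function.Injective g := by
    intro a b hab
    simpa [hg, Prod.ext_iff] using hab
  -- Part 1 : ‖incl (T k)‖² = 1/s k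
  have key1 : ∀ k, 0 < s k → ‖incl (T k)‖ ^ 2 = 1 / s k := by
    intro k hk
    have hTk : incl (T k) = ∑ z ∈ (Finset.range k).image g,
        lp.single 2 z (((s k * Real.sqrt (lam z.1.2) : ℝ) : ℂ))⁻¹ := by
      rw [hT, map_sum, Finset.sum_image (fun a _ b _ h => hginj h)]
      exact Finset.sum_congr rfl fun n _ => hincl _ _
    have hnorm := lp.norm_sum_single (p := 2) (by norm_num)
      (fun z : (ℕ × ℕ) × ℕ × ℕ => (((s k * Real.sqrt (lam z.1.2) : ℝ) : ℂ))⁻¹)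
      ((Finset.range k).image g)
    rw [show (2 : ENNReal).toReal = (2 : ℝ) from by norm_num] at hnorm
    have hsum : ∑ z ∈ (Finset.range k).image g,
        ‖(((s k * Real.sqrt (lam z.1.2) : ℝ) : ℂ))⁻¹‖ ^ (2:ℝ)
        = ∑ n ∈ Finset.range k, ‖(((s k * Real.sqrt (lam n) : ℝ) : ℂ))⁻¹‖ ^ (2:ℝ) := by
      rw [Finset.sum_image (fun a _ b _ h => hginj h)]
    have hterm : ∀ n ∈ Finset.range k,
        ‖(((s k * Real.sqrt (lam n) : ℝ) : ℂ))⁻¹‖ ^ (2:ℝ) = (1 / s k ^ 2) * (1 / lam n) := by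
      intro n _
      have h1 : (0:ℝ) < Real.sqrt (lam n) := Real.sqrt_pos.2 (hpos n)
      have h2 : (0:ℝ) < s k * Real.sqrt (lam n) := mul_pos hk h1
      rw [norm_inv, Complex.norm_real, Real.norm_of_nonneg h2.le, Real.rpow_two]
      have h3 : Real.sqrt (lam n) ^ 2 = lam n := Real.sq_sqrt (hpos n).le
      rw [mul_inv, mul_pow, inv_pow, inv_pow, h3]
      simp [one_div]
    have : ‖incl (T k)‖ ^ (2:ℝ) = 1 / s k := by
      rw [hTk, hnorm, hsum, Finset.sum_congr rfl hterm, ← Finset.mul_sum, ← hs k]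
      field_simp
    rw [← Real.rpow_natCast ‖incl (T k)‖ 2, show ((2:ℕ):ℝ) = (2:ℝ) from by norm_num]
    exact this
  -- eventually s k > 0
  have hpos' : ∀ᶠ k in atTop, 0 < s k := hdiv.eventually_gt_atTop 0
  -- Part 2 : tendsto 0
  have key2 : Tendsto (fun k => incl (T k)) atTop (nhds 0) := by
    rw [tendsto_zero_iff_norm_tendsto_zero]
    have hsq : Tendsto (fun k => ‖incl (T k)‖ ^ 2) atTop (nhds 0) := by
      apply Tendsto.congr' (by filter_upwards [hpos'] with k hk using (key1 k hk).symm)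
      exact tendsto_const_nhds.div_atTop hdiv
    have := (Real.continuous_sqrt.tendsto 0).comp hsq
    simp only [Real.sqrt_zero] at this
    refine this.congr fun k => ?_
    simp only [Function.comp_apply]
    rw [Real.sqrt_sq (norm_nonneg _)]
  -- Part 3 : mult (T k) = e₀₀
  have key3 : ∀ k, 0 < s k → mult (T k) = lp.single 2 ((0 : ℕ), (0 : ℕ)) (1 : ℂ) := by
    intro k hk
    rw [hT, map_sum]
    have : ∀ n ∈ Finset.range k,
        mult (Finsupp.single ((0, n), (n, 0)) (((s k * Real.sqrt (lam n) : ℝ) : ℂ))⁻¹)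
          = lp.single (E := fun _ : ℕ × ℕ => ℂ) 2 (0, 0) ((1 / (s k * lam n) : ℝ) : ℂ) := by
      intro n _
      rw [hmult, if_pos rfl]
      congr 1
      have h1 : (0:ℝ) < Real.sqrt (lam n) := Real.sqrt_pos.2 (hpos n)
      have hreal : (Real.sqrt (lam n))⁻¹ * (s k * Real.sqrt (lam n))⁻¹
          = 1 / (s k * lam n) := by
        have hmul : Real.sqrt (lam n) * Real.sqrt (lam n) = lam n :=
          Real.mul_self_sqrt (hpos n).le
        have hinv : (Real.sqrt (lam n))⁻¹ * (Real.sqrt (lam n))⁻¹ = (lam n)⁻¹ := by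
          rw [← mul_inv, hmul]
        rw [mul_inv, one_div, mul_inv]
        calc (Real.sqrt (lam n))⁻¹ * ((s k)⁻¹ * (Real.sqrt (lam n))⁻¹)
            = ((Real.sqrt (lam n))⁻¹ * (Real.sqrt (lam n))⁻¹) * (s k)⁻¹ := by ring
          _ = (s k)⁻¹ * (lam n)⁻¹ := by rw [hinv]; ring
      calc ((Real.sqrt (lam n) : ℂ))⁻¹ * (((s k * Real.sqrt (lam n) : ℝ) : ℂ))⁻¹
          = (((Real.sqrt (lam n))⁻¹ * (s k * Real.sqrt (lam n))⁻¹ : ℝ) : ℂ) := by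
            push_cast; ring
        _ = ((1 / (s k * lam n) : ℝ) : ℂ) := by rw [hreal]
    rw [Finset.sum_congr rfl this, single_sum_aux]
    congr 1
    have : ∑ n ∈ Finset.range k, ((1 / (s k * lam n) : ℝ) : ℂ)
        = (((s k)⁻¹ * ∑ n ∈ Finset.range k, 1 / lam n : ℝ) : ℂ) := by
      push_cast
      rw [Finset.mul_sum]
      congr 1; funext n
      field_simp
    rw [this, ← hs k]
    rw [inv_mul_cancel₀ hk.ne']
    norm_num
  -- Part 4 : e₀₀ ≠ 0
  have key4 : lp.single (E := fun _ : ℕ × ℕ => ℂ) 2 ((0 : ℕ), (0 : ℕ)) (1 : ℂ) ≠ 0 := by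
    intro h
    have := congrArg (fun f : HSmat => (f : ∀ _ : ℕ × ℕ, ℂ) (0, 0)) h
    simp only [lp.single_apply_self, lp.coeFn_zero, Pi.zero_apply] at this
    exact one_ne_zero this
  refine ⟨key1, key2, key3, key4, ?_⟩
  intro H
  apply key4
  refine H T (lp.single 2 ((0 : ℕ), (0 : ℕ)) (1 : ℂ)) key2 ?_
  refine Tendsto.congr' ?_ tendsto_const_nhds
  filter_upwards [hpos'] with k hk using (key3 k hk).symm
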